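/- arXiv:2509.16042 — 3 statements merged into one kernel-verified Lean document; each statement's English description precedes it below -/
import Mathlib

section
/- Let L be a free abelian group with basis ℓ, e₁, …, e₆. Let [L₀] = 2ℓ − e₁ − e₂ − e₃ − e₄ − e₅ (so the coefficient of e₆ is 0) and [C] = 3ℓ − e₁ − ⋯ − e₆ − [L₀] = ℓ − e₆. Then the quotient L/(ℤ[L₀] + ℤ[C]) is torsion-free; i.e., if n·D ∈ ℤ[L₀] + ℤ[C] for some D ∈ L and some integer n > 0, then D ∈ ℤ[L₀] + ℤ[C]. -/
/-!
Let `p D = -(D 1) • [L₀] - (D 6) • [C]`. Since `[L₀]` has coordinates `-1, 0` and `[C]` has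
coordinates `0, -1` at positions `1` and `6`, `p` fixes `[L₀]` and `[C]`, so it is an idempotent
endomorphism of `ℤ⁷` with image `ℤ[L₀] + ℤ[C]`. The image of an idempotent is the fixed locus
`{D | p D = D}`, and in a torsion-free module `n • p D = n • D` forces `p D = D`.
-/

open LinearMap

theorem IsIdempotentElem.mem_range_of_smul_mem_range {R M : Type*} [Semiring R]
    [IsCancelMulZero R] [AddCommMonoid M] [Module R M] [Module.IsTorsionFree R M]
    {p : M →ₗ[R] M} (hp : IsIdempotentElem p) {r : R} (hr : r ≠ 0) {x : M}
    (h : r • x ∈ range p) : x ∈ range p := by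
  rw [hp.mem_range_iff] at h ⊢
  rwa [map_smul, smul_right_inj hr] at h

def projL₀C : (Fin 7 → ℤ) →ₗ[ℤ] (Fin 7 → ℤ) :=
  -(LinearMap.proj 1).smulRight ![2,-1,-1,-1,-1,-1,0]
    - (LinearMap.proj 6).smulRight ![1,0,0,0,0,0,-1]

theorem projL₀C_apply (D : Fin 7 → ℤ) :
    projL₀C D = -D 1 • ![2,-1,-1,-1,-1,-1,0] - D 6 • ![1,0,0,0,0,0,-1] := by
  simp [projL₀C, neg_smul]

theorem isIdempotentElem_projL₀C : IsIdempotentElem projL₀C := by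
  refine LinearMap.ext fun D => ?_
  simp only [Module.End.mul_apply, projL₀C_apply]
  funext i
  fin_cases i <;> simp

theorem range_projL₀C :
    range projL₀C = Submodule.span ℤ
      ({![2,-1,-1,-1,-1,-1,0], ![1,0,0,0,0,0,-1]} : Set (Fin 7 → ℤ)) := by
  refine le_antisymm ?_ (Submodule.span_le.2 ?_)
  · rintro _ ⟨D, rfl⟩
    rw [projL₀C_apply]
    exact sub_mem (Submodule.smul_mem _ _ (Submodule.subset_span (by simp)))
      (Submodule.smul_mem _ _ (Submodule.subset_span (by simp)))
  · rintro v (rfl | rfl) <;> rw [SetLike.mem_coe, isIdempotentElem_projL₀C.mem_range_iff] <;>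
      · funext i
        fin_cases i <;> simp [projL₀C_apply]

/-- Torsion-freeness of the quotient of the free abelian group on ℓ, e₁, …, e₆
by the span of [L₀] = 2ℓ − e₁ − e₂ − e₃ − e₄ − e₅ and [C] = ℓ − e₆. -/
theorem stmt0 (D : Fin 7 → ℤ) (n : ℤ) (hn : 0 < n)
    (h : n • D ∈ Submodule.span ℤ
      ({![2,-1,-1,-1,-1,-1,0], ![1,0,0,0,0,0,-1]} : Set (Fin 7 → ℤ))) :
    D ∈ Submodule.span ℤ
      ({![2,-1,-1,-1,-1,-1,0], ![1,0,0,0,0,0,-1]} : Set (Fin 7 → ℤ)) := by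
  rw [← range_projL₀C] at h ⊢
  exact isIdempotentElem_projL₀C.mem_range_of_smul_mem_range hn.ne' h
end

section
/- Let L be a free abelian group with basis ℓ, e₁, …, e₆. Let [L₀] = ℓ − e₁ − e₂ and [C] = 3ℓ − e₁ − ⋯ − e₆ − [L₀] = 2ℓ − e₃ − e₄ − e₅ − e₆. Then the quotient L/(ℤ[L₀] + ℤ[C]) is torsion-free. -/
/-! Coordinates 1 and 3, negated, form a dual pair for the two generators: each vanishes on one
generator and takes the value 1 on the other. Hence a coefficient representation of any element of
the span is read off from these coordinates, and `n • D = a • L₀ + b • C` forces `a` and `b` to be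
divisible by `n`. -/

section DualPair

variable {R M : Type*} [CommRing R] [AddCommGroup M] [Module R M]
  {v w : M} {f g : M →ₗ[R] R}

theorem eq_of_mem_span_pair_of_dual (hfv : f v = 1) (hfw : f w = 0) (hgv : g v = 0)
    (hgw : g w = 1) {x : M} (hx : x ∈ Submodule.span R {v, w}) :
    x = f x • v + g x • w := by
  obtain ⟨a, b, rfl⟩ := Submodule.mem_span_pair.mp hx
  simp [hfv, hfw, hgv, hgw]

theorem mem_span_pair_of_smul_mem_of_dual [IsDomain R] [Module.IsTorsionFree R M] (hfv : f v = 1)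
    (hfw : f w = 0) (hgv : g v = 0) (hgw : g w = 1) {n : R} (hn : n ≠ 0) {x : M}
    (hx : n • x ∈ Submodule.span R {v, w}) : x ∈ Submodule.span R {v, w} := by
  have hnx := eq_of_mem_span_pair_of_dual hfv hfw hgv hgw hx
  refine Submodule.mem_span_pair.mpr ⟨f x, g x, smul_right_injective M hn ?_⟩
  simp only [map_smul, smul_eq_mul] at hnx
  simp only [hnx, smul_add, smul_smul, mul_comm n]

end DualPair

/-- Torsion-freeness of the quotient of the free abelian group on ℓ, e₁, …, e₆
by the span of [L₀] = ℓ − e₁ − e₂ and [C] = 2ℓ − e₃ − e₄ − e₅ − e₆. -/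
theorem stmt2 (D : Fin 7 → ℤ) (n : ℤ) (hn : 0 < n)
    (h : n • D ∈ Submodule.span ℤ
      ({![1,-1,-1,0,0,0,0], ![2,0,0,-1,-1,-1,-1]} : Set (Fin 7 → ℤ))) :
    D ∈ Submodule.span ℤ
      ({![1,-1,-1,0,0,0,0], ![2,0,0,-1,-1,-1,-1]} : Set (Fin 7 → ℤ)) :=
  mem_span_pair_of_smul_mem_of_dual (f := -LinearMap.proj 1) (g := -LinearMap.proj 3)
    rfl rfl rfl rfl hn.ne' h
end

section
/- Let F ∈ ℚ[t] be a separable cubic polynomial with nonzero t² coefficient and distinct roots α₁, α₂, α₃ in an algebraic closure. Then for all but finitely many a ∈ ℚ^×, the polynomial H(t) = F(t)·F(t − a) has six distinct roots, the sum of its roots is nonzero, and no three of its roots sum to zero. -/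
/-!
Let `M` be the three roots of `F` and `b` the image of `a`; the roots of `H` are `M + (M + b)`.
A sub-multiset of them splits as `S + (T + b)` with `S, T ≤ M`, and its sum is
`ΣS + ΣT + |T| • b`. So apart from the finitely many `b` that are a difference of two roots or
solve `ΣS + ΣT + |T| • b = 0` for some `T ≠ 0`, the roots are distinct and every zero-sum
sub-multiset lies inside `M`. The only candidate of size 3 is then `M` itself, whose sum is
`-F.coeff 2 / F.leadingCoeff ≠ 0`.
-/

open Polynomial

namespace Polynomial

theorem roots_comp_X_sub_C {R : Type*} [CommRing R] [IsDomain R] (p : R[X]) (b : R) :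
    (p.comp (X - C b)).roots = p.roots.map (· + b) := by
  simpa [sub_eq_add_neg] using roots_comp_C_mul_X_add_C p 1 (-b) isUnit_one

theorem roots_mul_comp_X_sub_C {R : Type*} [CommRing R] [IsDomain R] {p : R[X]} (hp : p ≠ 0)
    (b : R) : (p * p.comp (X - C b)).roots = p.roots + p.roots.map (· + b) := by
  have hcomp : p.comp (X - C b) ≠ 0 := by
    rwa [sub_eq_add_neg, ← C_neg, comp_X_add_C_ne_zero_iff]
  rw [roots_mul (mul_ne_zero hp hcomp), roots_comp_X_sub_C]

theorem Splits.sum_roots_ne_zero {R : Type*} [CommRing R] [IsDomain R] {p : R[X]}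
    (hp : p.Splits) (h : p.nextCoeff ≠ 0) : p.roots.sum ≠ 0 := by
  intro h0
  rw [hp.nextCoeff_eq_neg_sum_roots_mul_leadingCoeff, h0, mul_zero] at h
  exact h rfl

end Polynomial

section BadShifts

variable {A : Type*} [AddCommGroup A] {M S : Multiset A} {b : A}

theorem Multiset.exists_eq_add_map_add_of_le (h : S ≤ M + M.map (· + b)) :
    ∃ S₁ ≤ M, ∃ T ≤ M, S = S₁ + T.map (· + b) := by
  classical
  have hS₂ : S - M ≤ M.map (· + b) := Multiset.sub_le_iff_le_add.mpr (by rwa [add_comm] at h)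
  have hback : ((S - M).map (· - b)).map (· + b) = S - M := by simp [Multiset.map_map]
  refine ⟨S ∩ M, Multiset.inter_le_right, (S - M).map (· - b), ?_, ?_⟩
  · exact (Multiset.map_le_map_iff (add_left_injective b)).mp (by rwa [hback])
  · rw [hback, add_comm, Multiset.sub_add_inter]

theorem Multiset.sum_add_map_add (S T : Multiset A) (b : A) :
    (S + T.map (· + b)).sum = S.sum + T.sum + Multiset.card T • b := by
  simp [Multiset.sum_map_add, add_assoc]

def badShifts (M : Multiset A) : Set A :=
  {b | ∃ x ∈ M, ∃ y ∈ M, b = x - y} ∪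
    {b | ∃ S ≤ M, ∃ T ≤ M, T ≠ 0 ∧ S.sum + T.sum + Multiset.card T • b = 0}

theorem finite_badShifts [IsAddTorsionFree A] (M : Multiset A) : (badShifts M).Finite := by
  classical
  refine .union ?_ ?_
  · refine (M.toFinset.finite_toSet.image2 (· - ·) M.toFinset.finite_toSet).subset ?_
    rintro b ⟨x, hx, y, hy, rfl⟩
    exact ⟨x, by simpa using hx, y, by simpa using hy, rfl⟩
  · refine ((Set.finite_Iic M).biUnion fun S _ => (Set.finite_Iic M).biUnion fun T _ =>
      Set.Subsingleton.finite
        (s := {b | T ≠ 0 ∧ S.sum + T.sum + Multiset.card T • b = 0}) ?_).subset ?_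
    · rintro b ⟨hT, hb⟩ b' ⟨-, hb'⟩
      exact nsmul_right_injective (by simpa using hT) (add_left_cancel (hb.trans hb'.symm))
    · rintro b ⟨S, hS, T, hT, hT0, hb⟩
      exact Set.mem_biUnion (x := S) hS (Set.mem_biUnion (x := T) hT ⟨hT0, hb⟩)

theorem nodup_add_map_add (hM : M.Nodup) (hb : b ∉ badShifts M) :
    (M + M.map (· + b)).Nodup := by
  refine Multiset.nodup_add.mpr ⟨hM, hM.map (add_left_injective b), ?_⟩
  rw [Multiset.disjoint_left]
  intro x hx hx'
  obtain ⟨y, hy, rfl⟩ := Multiset.mem_map.mp hx'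
  exact hb (Or.inl ⟨y + b, hx, y, hy, by abel⟩)

theorem le_of_le_add_map_add_of_sum_eq_zero (hb : b ∉ badShifts M)
    (hS : S ≤ M + M.map (· + b)) (h0 : S.sum = 0) : S ≤ M := by
  obtain ⟨S₁, hS₁, T, hT, rfl⟩ := Multiset.exists_eq_add_map_add_of_le hS
  by_cases hT0 : T = 0
  · simpa [hT0] using hS₁
  · rw [Multiset.sum_add_map_add] at h0
    exact absurd (Or.inr ⟨S₁, hS₁, T, hT, hT0, h0⟩) hb

end BadShifts

/-- For a separable cubic F ∈ ℚ[t] with nonzero t²-coefficient, for all but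
finitely many a ∈ ℚ^×, the polynomial H(t) = F(t)·F(t − a) has six distinct
roots (in an algebraic closure), nonzero sum of roots, and no three of its
roots sum to zero. -/
theorem stmt15 (F : ℚ[X]) (hdeg : F.natDegree = 3) (hsep : F.Separable)
    (hc2 : F.coeff 2 ≠ 0) :
    {a : ℚ | a ≠ 0 ∧
      ¬ (letI H : ℚ[X] := F * F.comp (X - C a)
         letI R : Multiset (AlgebraicClosure ℚ) :=
           (H.map (algebraMap ℚ (AlgebraicClosure ℚ))).roots
         Multiset.card R = 6 ∧ R.Nodup ∧ R.sum ≠ 0 ∧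
           ∀ S ≤ R, Multiset.card S = 3 → S.sum ≠ 0)}.Finite := by
  set f := algebraMap ℚ (AlgebraicClosure ℚ)
  have hF : F.map f ≠ 0 :=
    Polynomial.map_ne_zero (ne_zero_of_natDegree_gt (hdeg ▸ zero_lt_three))
  set M := (F.map f).roots
  have hcard : Multiset.card M = 3 := by
    rw [IsAlgClosed.card_roots_eq_natDegree, natDegree_map, hdeg]
  have hsum : M.sum ≠ 0 := (IsAlgClosed.splits _).sum_roots_ne_zero <| by
    rwa [nextCoeff_map f.injective, nextCoeff_of_natDegree_pos (by omega), hdeg, _root_.map_ne_zero]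
  refine ((finite_badShifts M).preimage f.injective.injOn).subset ?_
  rintro a ⟨-, hbad⟩
  by_contra hb
  refine hbad ?_
  have hR : ((F * F.comp (X - C a)).map f).roots = M + M.map (· + f a) := by
    rw [Polynomial.map_mul, Polynomial.map_comp, Polynomial.map_sub, map_X, map_C,
      roots_mul_comp_X_sub_C hF]
  simp only [hR]
  refine ⟨by simp [hcard], nodup_add_map_add (nodup_roots hsep.map) hb, fun h => ?_,
    fun S hS h3 h0 => ?_⟩
  · have := Multiset.card_le_card (le_of_le_add_map_add_of_sum_eq_zero hb le_rfl h)
    simp [hcard] at this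
  · exact hsum (Multiset.eq_of_le_of_card_le (le_of_le_add_map_add_of_sum_eq_zero hb hS h0)
      (by rw [hcard, h3]) ▸ h0)
end
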